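/- For every s ≥ 1 and n ≥ 2s, the hat guessing game ⟨P_n, constant hatness 4s−2, constant guessing number s⟩ is winning. Combined with the losing result for hatness 4s−1, this gives HG_s(P_n) = 4s−2 for n ≥ 2s, and sup over all paths of HG_s equals 4s−2. -/
import Mathlib


/-- A winning strategy in the hat guessing game `⟨G, h, g⟩`: each sage `v` deterministically
outputs at most `g v` guesses depending only on the hat colors of its neighbors, and for
every hat assignment (with `c v < h v`) some sage's guess set contains its own color. -/
def HatWinning {V : Type*} (G : SimpleGraph V) (h g : V → ℕ) : Prop :=
  ∃ σ : V → (V → ℕ) → Finset ℕ,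
    (∀ v c c', (∀ u, G.Adj v u → c u = c' u) → σ v c = σ v c') ∧
    (∀ v c, (σ v c).card ≤ g v) ∧
    ∀ c : V → ℕ, (∀ v, c v < h v) → ∃ v, c v ∈ σ v c

/-- The hat guessing game played by the sages occupying the vertices of `S` only
(the game on the induced subgraph `G[S]`). -/
def HatWinningOn {V : Type*} (G : SimpleGraph V) (S : Set V) (h g : V → ℕ) : Prop :=
  ∃ σ : V → (V → ℕ) → Finset ℕ,
    (∀ v ∈ S, ∀ c c', (∀ u ∈ S, G.Adj v u → c u = c' u) → σ v c = σ v c') ∧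
    (∀ v ∈ S, ∀ c, (σ v c).card ≤ g v) ∧
    ∀ c : V → ℕ, (∀ v ∈ S, c v < h v) → ∃ v ∈ S, c v ∈ σ v c

namespace PathHG

/-! Helper modular arithmetic lemmas -/

lemma mod2h {h a : ℕ} (_hh : 0 < h) (ha : a < 2*h) : a % h = if a < h then a else a - h := by
  split_ifs with h1
  · exact Nat.mod_eq_of_lt h1
  · rw [Nat.mod_eq_sub_mod (by omega)]
    exact Nat.mod_eq_of_lt (by omega)

lemma canon {h y : ℕ} (hh : 0 < h) (hy : y < h) (b : ℕ) :
    (b + (h + y - b % h) % h) % h = y := by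
  have hm : b % h < h := Nat.mod_lt _ hh
  have hDlt : (h + y - b % h) % h < h := Nat.mod_lt _ hh
  have hDval : (h + y - b % h) % h
      = if h + y - b % h < h then h + y - b % h else h + y - b % h - h :=
    mod2h hh (by omega)
  have e1 : (b + (h + y - b % h) % h) % h = (b % h + (h + y - b % h) % h) % h := by
    conv_lhs => rw [Nat.add_mod]
    rw [Nat.mod_mod_of_dvd _ dvd_rfl]
  have f1 : (b % h + (h + y - b % h) % h) % h
      = if b % h + (h + y - b % h) % h < h then b % h + (h + y - b % h) % h
        else b % h + (h + y - b % h) % h - h :=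
    mod2h hh (by omega)
  rw [e1, f1]
  split_ifs at hDval ⊢ <;> omega

lemma uniqmod {h : ℕ} (hh : 0 < h) {b j j' : ℕ} (hj : j < h) (hj' : j' < h)
    (e : (b + j) % h = (b + j') % h) : j = j' := by
  have hm : b % h < h := Nat.mod_lt _ hh
  have e1 : (b + j) % h = (b % h + j) % h := by
    conv_lhs => rw [Nat.add_mod]
    rw [Nat.mod_eq_of_lt hj]
  have e1' : (b + j') % h = (b % h + j') % h := by
    conv_lhs => rw [Nat.add_mod]
    rw [Nat.mod_eq_of_lt hj']
  have f1 : (b % h + j) % h = if b % h + j < h then b % h + j else b % h + j - h :=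
    mod2h hh (by omega)
  have f1' : (b % h + j') % h = if b % h + j' < h then b % h + j' else b % h + j' - h :=
    mod2h hh (by omega)
  rw [e1, f1, e1', f1'] at e
  split_ifs at e <;> omega

/-- The key counting lemma: among `t` consecutive (mod `h`) values `x = (b+r) % h`,
at most `s'` satisfy `y ∈ [w*x, w*x + w) (mod h)`. -/
lemma countA {h s' : ℕ} (hh : 0 < h) {w t : ℕ} (hw : 0 < w) (hwh : w ≤ h)
    (htw : t * w ≤ s' * h) (b y : ℕ) :
    ((Finset.range t).filter fun r =>
        ∃ j ∈ Finset.range w, (w * ((b + r) % h) + j) % h = y).card ≤ s' := by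
  have hnorm : ∀ r j, (w * ((b + r) % h) + j) % h = (w * (b + r) + j) % h := by
    intro r j
    conv_lhs => rw [Nat.add_mod]
    conv_rhs => rw [Nat.add_mod]
    rw [Nat.mul_mod, Nat.mod_mod_of_dvd _ dvd_rfl, ← Nat.mul_mod]
  rcases Nat.lt_or_ge y h with hy | hy
  · set jr : ℕ → ℕ := fun r => (h + y - (w * (b + r)) % h) % h with hjr
    set φ : ℕ → ℕ := fun r => (w * r + jr r) / h with hφ
    have hjrh : ∀ r, jr r < h := fun r => Nat.mod_lt _ hh
    have hcanon : ∀ r, (w * (b + r) + jr r) % h = y := fun r => canon hh hy _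
    -- membership in the filter forces the canonical witness to be small
    have hgood : ∀ r ∈ (Finset.range t).filter (fun r =>
        ∃ j ∈ Finset.range w, (w * ((b + r) % h) + j) % h = y), jr r < w := by
      intro r hr
      obtain ⟨-, j, hjw, hj⟩ := Finset.mem_filter.mp hr
      rw [hnorm] at hj
      have : j = jr r :=
        uniqmod hh (lt_of_lt_of_le (Finset.mem_range.mp hjw) hwh) (hjrh r)
          (hj.trans (hcanon r).symm)
      exact this ▸ Finset.mem_range.mp hjw
    have hmaps : ∀ r ∈ (Finset.range t).filter (fun r =>
        ∃ j ∈ Finset.range w, (w * ((b + r) % h) + j) % h = y), φ r ∈ Finset.range s' := by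
      intro r hr
      have hrt : r < t := Finset.mem_range.mp (Finset.mem_filter.mp hr).1
      have h1 : w * r + jr r < t * w := by
        have := hgood r hr
        calc w * r + jr r < w * r + w := by omega
        _ = w * (r + 1) := by ring
        _ ≤ w * t := Nat.mul_le_mul_left w (by omega)
        _ = t * w := Nat.mul_comm _ _
      exact Finset.mem_range.mpr ((Nat.div_lt_iff_lt_mul hh).mpr (lt_of_lt_of_le h1 htw))
    refine le_trans (Finset.card_le_card_of_injOn φ hmaps ?_) (by simp)
    intro r hr r' hr' he
    simp only [Finset.mem_coe] at hr hr'
    have hkr : (w * b + (w * r + jr r)) % h = y := by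
      have := hcanon r
      rwa [Nat.mul_add, Nat.add_assoc] at this
    have hkr' : (w * b + (w * r' + jr r')) % h = y := by
      have := hcanon r'
      rwa [Nat.mul_add, Nat.add_assoc] at this
    have hmodeq : (w * r + jr r) % h = (w * r' + jr r') % h :=
      Nat.ModEq.add_left_cancel' (w * b) (hkr.trans hkr'.symm)
    have hdiv : (w * r + jr r) / h = (w * r' + jr r') / h := he
    have hk : w * r + jr r = w * r' + jr r' := by
      have d1 := Nat.div_add_mod (w * r + jr r) h
      have d2 := Nat.div_add_mod (w * r' + jr r') h
      rw [hdiv, hmodeq] at d1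
      exact d1.symm.trans d2
    have e1 : (w * r + jr r) / w = r := by
      rw [Nat.mul_add_div hw, Nat.div_eq_of_lt (hgood r hr), Nat.add_zero]
    have e2 : (w * r' + jr r') / w = r' := by
      rw [Nat.mul_add_div hw, Nat.div_eq_of_lt (hgood r' hr'), Nat.add_zero]
    rw [← e1, ← e2, hk]
  · have : ((Finset.range t).filter fun r =>
        ∃ j ∈ Finset.range w, (w * ((b + r) % h) + j) % h = y) = ∅ := by
      refine Finset.filter_eq_empty_iff.mpr ?_
      rintro r - ⟨j, -, hj⟩
      have : (w * ((b + r) % h) + j) % h < h := Nat.mod_lt _ hh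
      omega
    rw [this]
    simp


/-! ## The winning strategy -/

/-- Extend a coloring of `Fin n` to `ℕ`. -/
def cext (n : ℕ) (c : Fin n → ℕ) : ℕ → ℕ := fun i => if h : i < n then c ⟨i, h⟩ else 0

/-- Size of the interval of candidate colors known to the sage at vertex `v`. -/
def tlen (s : ℕ) : ℕ → ℕ
  | 0 => 4*s - 2
  | v+1 => 4*s - 2 - (s + v)

/-- Start of the interval of candidate colors known to the sage at vertex `v`. -/
def stt (s : ℕ) (C : ℕ → ℕ) : ℕ → ℕ
  | 0 => 0
  | v+1 => (s + v) * C v + (s + v)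

/-- The candidate interval for the color of vertex `v`. -/
def SS (s : ℕ) (C : ℕ → ℕ) (v : ℕ) : Finset ℕ :=
  (Finset.range (tlen s v)).image fun r => (stt s C v + r) % (4*s - 2)

/-- The strategy. -/
def sig (s n : ℕ) (v : Fin n) (c : Fin n → ℕ) : Finset ℕ :=
  if v.val + 1 < 2*s then
    (SS s (cext n c) v.val).filter fun x =>
      ∃ j ∈ Finset.range (s + v.val), ((s + v.val) * x + j) % (4*s - 2) = cext n c (v.val + 1)
  else if v.val + 1 = 2*s then SS s (cext n c) v.val
  else ∅

lemma tw_le {s : ℕ} (hs : 1 ≤ s) {v : ℕ} (hv : v + 1 < 2*s) :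
    tlen s v * (s + v) ≤ s * (4*s - 2) := by
  cases v with
  | zero =>
      simp only [tlen, Nat.add_zero]
      exact le_of_eq (Nat.mul_comm _ _)
  | succ u =>
      simp only [tlen]
      have h1 : s + u ≤ 4*s - 2 := by omega
      have h2 : 2 ≤ 4*s := by omega
      zify [h1, h2]
      have hx : (0:ℤ) ≤ ((u:ℤ) - s + 1) * ((u:ℤ) - s + 2) := by
        rcases le_or_gt (s:ℤ) (u+1) with h | h
        · nlinarith
        · nlinarith
      nlinarith [hx]

lemma sig_card {s n : ℕ} (hs : 1 ≤ s) (v : Fin n) (c : Fin n → ℕ) :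
    (sig s n v c).card ≤ s := by
  have hh : 0 < 4*s - 2 := by omega
  rw [sig]
  split_ifs with h1 h2
  · rw [SS, Finset.filter_image]
    refine le_trans Finset.card_image_le ?_
    exact countA hh (by omega) (by omega) (tw_le hs h1) _ _
  · refine le_trans Finset.card_image_le ?_
    rw [Finset.card_range]
    obtain ⟨u, hu⟩ : ∃ u, v.val = u + 1 := ⟨v.val - 1, by omega⟩
    rw [hu]
    simp only [tlen]
    omega
  · simp

lemma sig_sight {s n : ℕ} (hn : 2*s ≤ n) (v : Fin n) (c c' : Fin n → ℕ)
    (hcc : ∀ u, (SimpleGraph.pathGraph n).Adj v u → c u = c' u) :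
    sig s n v c = sig s n v c' := by
  have hstt : stt s (cext n c) v.val = stt s (cext n c') v.val := by
    rcases hv : v.val with _ | u
    · rfl
    · have hun : u < n := by have := v.isLt; omega
      have hadj : (SimpleGraph.pathGraph n).Adj v ⟨u, hun⟩ := by
        rw [SimpleGraph.pathGraph_adj]; right; rw [hv]
      have := hcc _ hadj
      simp only [stt, cext, hun, dif_pos]
      rw [this]
  have hSS : SS s (cext n c) v.val = SS s (cext n c') v.val := by
    rw [SS, SS, hstt]
  rw [sig, sig]
  split_ifs with h1 h2
  · have hvn : v.val + 1 < n := by omega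
    have hadj : (SimpleGraph.pathGraph n).Adj v ⟨v.val + 1, hvn⟩ := by
      rw [SimpleGraph.pathGraph_adj]; left; rfl
    have hC : cext n c (v.val + 1) = cext n c' (v.val + 1) := by
      simp only [cext, hvn, dif_pos]
      exact hcc _ hadj
    rw [hSS, hC]
  · exact hSS
  · rfl

lemma sig_win {s n : ℕ} (hs : 1 ≤ s) (hn : 2*s ≤ n) (c : Fin n → ℕ)
    (hc : ∀ v, c v < 4*s - 2) : ∃ v, c v ∈ sig s n v c := by
  by_contra hcon
  push_neg at hcon
  have hh : 0 < 4*s - 2 := by omega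
  set C := cext n c with hC
  have hCc : ∀ (i : ℕ) (hi : i < n), C i = c ⟨i, hi⟩ := by
    intro i hi; simp [hC, cext, hi]
  have hClt : ∀ i, i < n → C i < 4*s - 2 := by
    intro i hi; rw [hCc i hi]; exact hc _
  have key : ∀ i, i < 2*s → C i ∈ SS s C i := by
    intro i
    induction i with
    | zero =>
        intro _
        have h0 : (0:ℕ) < n := by omega
        refine Finset.mem_image.mpr ⟨C 0, Finset.mem_range.mpr ?_, ?_⟩
        · simpa only [tlen] using hClt 0 h0
        · simp only [stt, Nat.zero_add]
          exact Nat.mod_eq_of_lt (hClt 0 h0)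
    | succ i ih =>
        intro hi2
        have hin : i < n := by omega
        have hin' : i + 1 < n := by omega
        have hmem := ih (by omega)
        have hσ := hcon ⟨i, hin⟩
        rw [sig] at hσ
        rw [if_pos (show (⟨i, hin⟩ : Fin n).val + 1 < 2*s from hi2)] at hσ
        have hci : c ⟨i, hin⟩ = C i := (hCc i hin).symm
        rw [hci] at hσ
        have hpred : ¬ ∃ j ∈ Finset.range (s + i),
            ((s + i) * C i + j) % (4*s - 2) = C (i + 1) := by
          intro hex
          exact hσ (Finset.mem_filter.mpr ⟨hmem, hex⟩)
        set b := (s + i) * C i with hb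
        set y := C (i + 1) with hy0
        have hy : y < 4*s - 2 := hClt (i+1) hin'
        set h' := 4*s - 2 with hh'
        set k0 := (h' + y - b % h') % h' with hk0def
        have hk0 : k0 < h' := Nat.mod_lt _ hh
        have hbk : (b + k0) % h' = y := canon hh hy b
        have hk0w : ¬ k0 < s + i := by
          intro hlt
          exact hpred ⟨k0, Finset.mem_range.mpr hlt, hbk⟩
        refine Finset.mem_image.mpr ⟨k0 - (s + i), Finset.mem_range.mpr ?_, ?_⟩
        · simp only [tlen]; omega
        · simp only [stt]
          rw [show (s + i) * C i + (s + i) + (k0 - (s + i)) = b + k0 by omega]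
          exact hbk
  have hlast : (2*s - 1 : ℕ) < n := by omega
  have hσ := hcon ⟨2*s - 1, hlast⟩
  rw [sig] at hσ
  rw [if_neg (by simp only; omega), if_pos (by simp only; omega)] at hσ
  have hk := key (2*s-1) (by omega)
  rw [hCc (2*s-1) hlast] at hk
  exact hσ hk


/-! ## The adversary for hatness `≥ 4s-1` -/

section Adv

variable {n : ℕ} (k s : ℕ) (σ : Fin n → (Fin n → ℕ) → Finset ℕ)

/-- A coloring exposing only the two neighbor colors of `v`. -/
def dummyc (v : Fin n) (a b : ℕ) : Fin n → ℕ := fun u =>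
  if u.val + 1 = v.val then a else if u.val = v.val + 1 then b else 0

/-- The guesses of vertex `i` as a function of neighbor colors. -/
def Gn (i a b : ℕ) : Finset ℕ :=
  if hi : i < n then σ ⟨i, hi⟩ (dummyc ⟨i, hi⟩ a b) else ∅

/-- How many right-neighbor colors make `x` a correct guess for vertex `i`. -/
def bad (i a x : ℕ) : ℕ := ((Finset.range k).filter fun y => x ∈ Gn σ i a y).card

noncomputable def pick (i a : ℕ) (S : Finset ℕ) : ℕ :=
  if hS : S.Nonempty then (S.exists_min_image (bad k σ i a) hS).choose else 0

noncomputable def F : ℕ → ℕ × Finset ℕ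
  | 0 =>
      let x := pick k σ 0 0 (Finset.range k)
      (x, (Finset.range k).filter fun y => x ∉ Gn σ 0 0 y)
  | (i+1) =>
      let x := pick k σ (i+1) (F i).1 (F i).2
      (x, (Finset.range k).filter fun y => x ∉ Gn σ (i+1) (F i).1 y)

noncomputable def prevc : ℕ → ℕ
  | 0 => 0
  | (i+1) => (F k σ i).1

noncomputable def Sof : ℕ → Finset ℕ
  | 0 => Finset.range k
  | (i+1) => (F k σ i).2

lemma F_eq (i : ℕ) : F k σ i =
    (pick k σ i (prevc k σ i) (Sof k σ i),
      (Finset.range k).filter fun y => (F k σ i).1 ∉ Gn σ i (prevc k σ i) y) := by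
  cases i with
  | zero => rw [F]; rfl
  | succ i => rw [F]; rfl

lemma pig (hs : 1 ≤ s) (hk : 4*s - 1 ≤ k)
    (hGcard : ∀ i a b, (Gn σ i a b).card ≤ s)
    (i a : ℕ) (S : Finset ℕ) (hS : 2*s ≤ S.card) :
    pick k σ i a S ∈ S ∧
      2*s ≤ ((Finset.range k).filter fun y => pick k σ i a S ∉ Gn σ i a y).card := by
  have hne : S.Nonempty := Finset.card_pos.mp (by omega)
  rw [pick, dif_pos hne]
  obtain ⟨hx, hmin⟩ := (S.exists_min_image (bad k σ i a) hne).choose_spec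
  set x := (S.exists_min_image (bad k σ i a) hne).choose with hxdef
  refine ⟨hx, ?_⟩
  -- double counting
  have hsum : ∑ x' ∈ S, bad k σ i a x' ≤ k * s := by
    have e1 : ∀ x', bad k σ i a x' = ∑ y ∈ Finset.range k, if x' ∈ Gn σ i a y then 1 else 0 := by
      intro x'; rw [bad, Finset.card_filter]
    calc ∑ x' ∈ S, bad k σ i a x'
        = ∑ x' ∈ S, ∑ y ∈ Finset.range k, if x' ∈ Gn σ i a y then 1 else 0 := by
          exact Finset.sum_congr rfl fun x' _ => e1 x'
      _ = ∑ y ∈ Finset.range k, ∑ x' ∈ S, if x' ∈ Gn σ i a y then 1 else 0 :=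
          Finset.sum_comm
      _ = ∑ y ∈ Finset.range k, (S.filter fun x' => x' ∈ Gn σ i a y).card := by
          exact Finset.sum_congr rfl fun y _ => (Finset.card_filter _ _).symm
      _ ≤ ∑ y ∈ Finset.range k, s := by
          refine Finset.sum_le_sum fun y _ => ?_
          refine le_trans (Finset.card_le_card fun z hz => (Finset.mem_filter.mp hz).2) ?_
          exact hGcard i a y
      _ = k * s := by rw [Finset.sum_const, Finset.card_range, smul_eq_mul]
  have hmin' : S.card * bad k σ i a x ≤ k * s := by
    refine le_trans ?_ hsum
    have := Finset.card_nsmul_le_sum S (bad k σ i a) (bad k σ i a x) (fun b hb => hmin b hb)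
    simpa using this
  have h2bad : 2 * bad k σ i a x ≤ k := by
    have h1 : (2*s) * bad k σ i a x ≤ S.card * bad k σ i a x :=
      Nat.mul_le_mul_right _ hS
    have h2 : (2 * bad k σ i a x) * s ≤ k * s := by
      calc (2 * bad k σ i a x) * s = (2*s) * bad k σ i a x := by ring
        _ ≤ k * s := le_trans h1 hmin'
    exact Nat.le_of_mul_le_mul_right h2 (by omega)
  have hbad : bad k σ i a x = ((Finset.range k).filter fun y => x ∈ Gn σ i a y).card := rfl
  rw [hbad] at h2bad
  have hsplit := Finset.card_filter_add_card_filter_not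
      (s := Finset.range k) (p := fun y => x ∈ Gn σ i a y)
  rw [Finset.card_range] at hsplit
  omega

lemma inv (hs : 1 ≤ s) (hk : 4*s - 1 ≤ k)
    (hGcard : ∀ i a b, (Gn σ i a b).card ≤ s) :
    ∀ i, (F k σ i).1 ∈ Sof k σ i ∧ 2*s ≤ ((F k σ i).2).card := by
  have hstep : ∀ i, 2*s ≤ (Sof k σ i).card →
      (F k σ i).1 ∈ Sof k σ i ∧ 2*s ≤ ((F k σ i).2).card := by
    intro i hSi
    obtain ⟨h1, h2⟩ := pig k s σ hs hk hGcard i (prevc k σ i) (Sof k σ i) hSi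
    constructor
    · rw [F_eq]; exact h1
    · have e2 : (F k σ i).2 =
          (Finset.range k).filter fun y => (F k σ i).1 ∉ Gn σ i (prevc k σ i) y := by
        conv_lhs => rw [F_eq]
      rw [e2]
      have e3 : (F k σ i).1 = pick k σ i (prevc k σ i) (Sof k σ i) := by
        conv_lhs => rw [F_eq]
      rw [e3]
      exact h2
  intro i
  induction i with
  | zero =>
      refine hstep 0 ?_
      simp only [Sof, Finset.card_range]
      omega
  | succ i ih =>
      refine hstep (i+1) ?_
      exact ih.2

lemma Sof_sub : ∀ i, Sof k σ i ⊆ Finset.range k := by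
  intro i
  cases i with
  | zero => exact Finset.Subset.refl _
  | succ i =>
      show (F k σ i).2 ⊆ _
      rw [F_eq]
      exact Finset.filter_subset _ _

end Adv


end PathHG

/-- For `n ≥ 2s` the game `⟨P_n, 4s-2, s⟩` is winning, and combined with the
losing result for hatness `4s-1` this gives `HG_s(P_n) = 4s-2` for `n ≥ 2s`. -/
theorem path_HG (s n : ℕ) (hs : 1 ≤ s) (hn : 2 * s ≤ n) :
    HatWinning (SimpleGraph.pathGraph n) (fun _ => 4 * s - 2) (fun _ => s) ∧
    (∀ k, HatWinning (SimpleGraph.pathGraph n) (fun _ => k) (fun _ => s) → k ≤ 4 * s - 2) := by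
  constructor
  · exact ⟨PathHG.sig s n,
      fun v c c' h => PathHG.sig_sight hn v c c' h,
      fun v c => PathHG.sig_card hs v c,
      fun c hc => PathHG.sig_win hs hn c hc⟩
  · intro k hwink
    by_contra hkle
    have hk : 4*s - 1 ≤ k := by omega
    obtain ⟨σ, hsig, hcard, hwin⟩ := hwink
    have hGcard : ∀ i a b, (PathHG.Gn σ i a b).card ≤ s := by
      intro i a b
      rw [PathHG.Gn]
      split_ifs with hi
      · exact hcard _ _
      · simp
    set c : Fin n → ℕ := fun v => (PathHG.F k σ v.val).1 with hcdef
    have hclt : ∀ v, c v < k := by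
      intro v
      have h1 := (PathHG.inv k s σ hs hk hGcard v.val).1
      have h2 := PathHG.Sof_sub k σ v.val h1
      exact Finset.mem_range.mp h2
    obtain ⟨v, hv⟩ := hwin c hclt
    have hag : ∀ u, (SimpleGraph.pathGraph n).Adj v u →
        c u = PathHG.dummyc v (PathHG.prevc k σ v.val) ((PathHG.F k σ (v.val+1)).1) u := by
      intro u hadj
      rcases SimpleGraph.pathGraph_adj.mp hadj with h1 | h2
      · simp only [PathHG.dummyc]
        rw [if_neg (by omega), if_pos (by omega)]
        show (PathHG.F k σ u.val).1 = _
        rw [← h1]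
      · simp only [PathHG.dummyc]
        rw [if_pos (by omega)]
        show (PathHG.F k σ u.val).1 = _
        rw [← h2]
        rfl
    have e1 : σ v c
        = σ v (PathHG.dummyc v (PathHG.prevc k σ v.val) ((PathHG.F k σ (v.val+1)).1)) :=
      hsig v c _ hag
    have e2 : σ v (PathHG.dummyc v (PathHG.prevc k σ v.val) ((PathHG.F k σ (v.val+1)).1))
        = PathHG.Gn σ v.val (PathHG.prevc k σ v.val) ((PathHG.F k σ (v.val+1)).1) := by
      rw [PathHG.Gn, dif_pos v.isLt]
    have h3 : (PathHG.F k σ (v.val+1)).1 ∈ (PathHG.F k σ v.val).2 :=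
      (PathHG.inv k s σ hs hk hGcard (v.val+1)).1
    have h5 : (PathHG.F k σ v.val).2 = (Finset.range k).filter
        (fun y => (PathHG.F k σ v.val).1 ∉ PathHG.Gn σ v.val (PathHG.prevc k σ v.val) y) :=
      congrArg Prod.snd (PathHG.F_eq k σ v.val)
    rw [h5] at h3
    have h6 := (Finset.mem_filter.mp h3).2
    rw [e1, e2] at hv
    exact h6 hv
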